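/- Let m ≥ 3 be an integer. The center of the dihedral Artin group G(m) is the infinite cyclic subgroup generated by z, where z = (x₁x₂)^{m/2} if m is even and z = (x₁x₂)^m if m is odd. -/

import Mathlib

/-- The alternating product `xyxy⋯` with `m` factors, starting with `x`. -/
def altProd {G : Type*} [Monoid G] : ℕ → G → G → G
  | 0, _, _ => 1
  | m + 1, x, y => x * altProd m y x

/-- The Artin relators associated to a Coxeter matrix `M` (with entries in `ℕ∞`):
for each pair `i ≠ j` with `M i j = m` finite, the relator `ₘ(xᵢ,xⱼ) ₘ(xⱼ,xᵢ)⁻¹`. -/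
def artinRels {n : ℕ} (M : Fin n → Fin n → ℕ∞) : Set (FreeGroup (Fin n)) :=
  { r | ∃ (i j : Fin n) (m : ℕ), i ≠ j ∧ M i j = (m : ℕ∞) ∧
        r = altProd m (FreeGroup.of i) (FreeGroup.of j) *
            (altProd m (FreeGroup.of j) (FreeGroup.of i))⁻¹ }

/-- The Artin group defined by the Coxeter matrix `M`. -/
abbrev ArtinGroup {n : ℕ} (M : Fin n → Fin n → ℕ∞) : Type := PresentedGroup (artinRels M)

/-- The standard generators of the Artin group. -/
def agen {n : ℕ} (M : Fin n → Fin n → ℕ∞) (i : Fin n) : ArtinGroup M :=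
  PresentedGroup.of i

/-- `M` is a Coxeter matrix of extra-large type: symmetric, `1` on the diagonal,
and all off-diagonal entries at least `4` (possibly `∞`). -/
structure IsXLMatrix {n : ℕ} (M : Fin n → Fin n → ℕ∞) : Prop where
  symm : ∀ i j, M i j = M j i
  diag : ∀ i, M i i = 1
  large : ∀ i j, i ≠ j → 4 ≤ M i j

/-- `M` is a Coxeter matrix of large type: symmetric, `1` on the diagonal,
and all off-diagonal entries at least `3` (possibly `∞`). -/
structure IsLargeMatrix {n : ℕ} (M : Fin n → Fin n → ℕ∞) : Prop where
  symm : ∀ i j, M i j = M j i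
  diag : ∀ i, M i i = 1
  large : ∀ i j, i ≠ j → 3 ≤ M i j

/-- The element of a group represented by a word over `X ∪ X⁻¹`, where a word is a list
of pairs `(i, ε)` with `ε = true` for the generator `x i` and `ε = false` for its inverse. -/
def wordProd {G : Type*} [Group G] {α : Type*} (x : α → G) (w : List (α × Bool)) : G :=
  (w.map fun p => if p.2 then x p.1 else (x p.1)⁻¹).prod

/-- The length `|g|` of `g`: the minimal length of a word over `X ∪ X⁻¹` representing `g`. -/
noncomputable def wlen {G : Type*} [Group G] {α : Type*} (x : α → G) (g : G) : ℕ :=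
  sInf { k | ∃ w : List (α × Bool), w.length = k ∧ wordProd x w = g }

/-- A word is geodesic if its length equals the length of the element it represents. -/
def IsGeodesicWord {G : Type*} [Group G] {α : Type*} (x : α → G) (w : List (α × Bool)) :
    Prop :=
  w.length = wlen x (wordProd x w)

/-- An element `g` is cyclically reduced if `|a g a⁻¹| ≥ |g|` for every letter
`a ∈ X ∪ X⁻¹`. -/
def CyclicallyReduced {G : Type*} [Group G] {α : Type*} (x : α → G) (g : G) : Prop :=
  ∀ p : α × Bool, wlen x g ≤ wlen x (wordProd x [p] * g * (wordProd x [p])⁻¹)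

/-- `d` is a left divisor of `g`: `|d| + |d⁻¹g| = |g|`. -/
def IsLeftDivisor {G : Type*} [Group G] {α : Type*} (x : α → G) (d g : G) : Prop :=
  wlen x d + wlen x (d⁻¹ * g) = wlen x g

/-- `d` is a right divisor of `g`: `|gd⁻¹| + |d| = |g|`. -/
def IsRightDivisor {G : Type*} [Group G] {α : Type*} (x : α → G) (d g : G) : Prop :=
  wlen x (g * d⁻¹) + wlen x d = wlen x g

/-- The Coxeter matrix of the dihedral Artin group `G(m)`. -/
def Mdih (m : ℕ) : Fin 2 → Fin 2 → ℕ∞ := fun i j => if i = j then 1 else (m : ℕ∞)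

/-- The dihedral Artin group `G(m) = ⟨x₁,x₂ ∣ ₘ(x₁,x₂) = ₘ(x₂,x₁)⟩`. -/
abbrev DihedralArtinGroup (m : ℕ) : Type := ArtinGroup (Mdih m)


/-!
The element `z` is central: for even `m = 2k` the relation reads `(x₁x₂)ᵏ = (x₂x₁)ᵏ`, and for odd
`m` the Garside element `Δ = ₘ(x₁,x₂) = ₘ(x₂,x₁)` swaps `x₁` and `x₂` under conjugation while
`Δ² = z`. Modulo `⟨z⟩` the group becomes a free product of two nontrivial cyclic groups:
`ℤ * ℤ/k` with generators `x₁` and `x₁x₂` when `m = 2k`, and `ℤ/2 * ℤ/m` with generators `Δ` and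
`x₁x₂` when `m` is odd. A free product of nontrivial groups has trivial center, because
conjugating a reduced word either lengthens it or moves its last letter to the front; hence the
center of `G(m)` lies in `⟨z⟩`. Finally `z` has infinite order, since the homomorphism
`G(m) → ℤ`, `xᵢ ↦ 1`, sends it to a positive integer.
-/

section AltProd

variable {M : Type*} [Monoid M]

theorem altProd_two_mul (k : ℕ) (x y : M) : altProd (2 * k) x y = (x * y) ^ k := by
  induction k generalizing x y with
  | zero => rw [Nat.mul_zero, pow_zero, altProd]
  | succ k ih => rw [Nat.mul_succ, altProd, altProd, ih, pow_succ', mul_assoc]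

theorem altProd_two_mul_add_one (k : ℕ) (x y : M) :
    altProd (2 * k + 1) x y = (x * y) ^ k * x := by
  rw [altProd, altProd_two_mul, mul_pow_mul]

theorem altProd_two_mul_add_one_mul (k : ℕ) (x y : M) :
    altProd (2 * k + 1) y x * x = y * altProd (2 * k + 1) x y := by
  rw [altProd_two_mul_add_one, mul_assoc, ← pow_succ]
  exact (altProd_two_mul (k + 1) y x).symm

theorem altProd_two_mul_add_one_mul_altProd (k : ℕ) (x y : M) :
    altProd (2 * k + 1) x y * altProd (2 * k + 1) y x = (x * y) ^ (2 * k + 1) := by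
  rw [altProd_two_mul_add_one, altProd_two_mul_add_one, mul_assoc, ← mul_assoc x, ← mul_pow_mul,
    mul_assoc, ← pow_succ, ← pow_add, two_mul, add_assoc]

theorem map_altProd {N : Type*} [Monoid N] (f : M →* N) (n : ℕ) (x y : M) :
    f (altProd n x y) = altProd n (f x) (f y) := by
  induction n generalizing x y with
  | zero => exact map_one f
  | succ n ih => rw [altProd, altProd, map_mul, ih]

variable {G : Type*} [Group G] {a b : G} {k : ℕ}

theorem altProd_two_mul_inv_mul_eq_one (hb : b ^ k = 1) :
    altProd (2 * k) a (a⁻¹ * b) = 1 ∧ altProd (2 * k) (a⁻¹ * b) a = 1 := by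
  have hconj : a⁻¹ * b * a = MulAut.conj a⁻¹ b := by
    rw [MulAut.conj_apply, inv_inv]
  rw [altProd_two_mul, altProd_two_mul, mul_inv_cancel_left, hb, hconj, ← map_pow, hb, map_one]
  exact ⟨rfl, rfl⟩

theorem altProd_two_mul_add_one_zpow_mul_eq (ha : a ^ 2 = 1) (hb : b ^ (2 * k + 1) = 1) :
    altProd (2 * k + 1) (b ^ (-k : ℤ) * a) (a⁻¹ * b ^ (k + 1)) = a ∧
      altProd (2 * k + 1) (a⁻¹ * b ^ (k + 1)) (b ^ (-k : ℤ) * a) = a := by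
  have hxy : b ^ (-k : ℤ) * a * (a⁻¹ * b ^ (k + 1)) = b := by group
  have hyx : a⁻¹ * b ^ (k + 1) * (b ^ (-k : ℤ) * a) = MulAut.conj a⁻¹ b := by
    rw [MulAut.conj_apply, inv_inv]
    group
  rw [altProd_two_mul_add_one, altProd_two_mul_add_one, hxy, hyx, ← map_pow]
  refine ⟨by group, ?_⟩
  calc MulAut.conj a⁻¹ (b ^ k) * (a⁻¹ * b ^ (k + 1)) = a⁻¹ * b ^ (2 * k + 1) := by
        rw [MulAut.conj_apply, inv_inv]
        group
    _ = a := by rw [hb, mul_one, inv_eq_of_mul_eq_one_right (by rwa [← sq])]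

end AltProd

namespace Monoid.CoprodI

variable {ι : Type*} {H : ι → Type*} [∀ i, Group (H i)]

namespace NeWord

theorem toList_eq_of_prod_eq [DecidableEq ι] [∀ i, DecidableEq (H i)] {i j k l : ι}
    {w : NeWord H i j} {w' : NeWord H k l} (h : w.prod = w'.prod) : w.toList = w'.toList :=
  congrArg Word.toList (Word.equiv.symm.injective h)

theorem prod_eq_of_or_exists_append_singleton {i l : ι} (w : NeWord H i l) :
    (∃ x : H l, x ≠ 1 ∧ i = l ∧ w.prod = of x) ∨
      ∃ (j : ι) (w₁ : NeWord H i j) (hjl : j ≠ l) (x : H l) (hx : x ≠ 1),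
        w.prod = (w₁.append hjl (singleton x hx)).prod := by
  induction w with
  | singleton x hx => exact .inl ⟨x, hx, rfl, prod_singleton ..⟩
  | append w₁ hjk w₂ _ ih₂ =>
    right
    rcases ih₂ with ⟨x, hx, rfl, hw₂⟩ | ⟨m, w₂', hml, x, hx, hw₂⟩
    · exact ⟨_, w₁, hjk, x, hx, by rw [append_prod, append_prod, hw₂, prod_singleton]⟩
    · exact ⟨m, w₁.append hjk w₂', hml, x, hx, by simp only [append_prod, hw₂, mul_assoc]⟩

/-- Moving the last letter to the front changes the factor of the first letter. -/
theorem prod_notMem_center_of_ne [DecidableEq ι] [∀ i, DecidableEq (H i)] {i l : ι}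
    (hil : i ≠ l) (w : NeWord H i l) : w.prod ∉ Subgroup.center (CoprodI H) := by
  intro hw
  obtain ⟨x, -, rfl, -⟩ | ⟨j, w₁, hjl, x, hx, hprod⟩ := w.prod_eq_of_or_exists_append_singleton
  · exact hil rfl
  have hrot : ((singleton x hx).append hil.symm w₁).prod = w.prod := by
    rw [append_prod, prod_singleton] at hprod ⊢
    calc of x * w₁.prod = of x * (w₁.prod * of x) * (of x)⁻¹ := by group
      _ = w.prod := by rw [← hprod, Subgroup.mem_center_iff.1 hw, mul_inv_cancel_right]
  have hhead := congrArg List.head? (toList_eq_of_prod_eq hrot)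
  simp only [toList_head?, Option.some.injEq] at hhead
  exact hil (congrArg Sigma.fst hhead).symm

/-- Conjugating by a letter from another factor lengthens the reduced word by two. -/
theorem prod_notMem_center [DecidableEq ι] [∀ i, DecidableEq (H i)] {i j : ι}
    (hji : j ≠ i) [Nontrivial (H j)] (w : NeWord H i i) :
    w.prod ∉ Subgroup.center (CoprodI H) := by
  intro hw
  obtain ⟨c, hc⟩ := exists_ne (1 : H j)
  let w' := (singleton c hc).append hji (w.append hji.symm (singleton c⁻¹ (inv_ne_one.2 hc)))
  have hprod : w'.prod = w.prod := by
    simp only [w', append_prod, prod_singleton, map_inv, ← mul_assoc]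
    rw [Subgroup.mem_center_iff.1 hw, mul_inv_cancel_right]
  have hlen := congrArg List.length (toList_eq_of_prod_eq hprod)
  simp only [w', toList, List.length_append, List.length_singleton] at hlen
  omega

end NeWord

theorem center_eq_bot [Nontrivial ι] [∀ i, Nontrivial (H i)] :
    Subgroup.center (CoprodI H) = ⊥ := by
  classical
  refine eq_bot_iff.2 fun g hg => Subgroup.mem_bot.2 ?_
  by_contra hg1
  have hword : Word.equiv g ≠ Word.empty := fun h => hg1 <| by
    rw [← Word.equiv.symm_apply_apply g, h]
    exact Word.prod_empty
  obtain ⟨i, l, w, hw⟩ := NeWord.of_word _ hword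
  have hwg : w.prod = g := by
    rw [NeWord.prod, hw]
    exact Word.equiv.symm_apply_apply g
  by_cases hil : i = l
  · subst hil
    obtain ⟨j, hji⟩ := exists_ne i
    exact w.prod_notMem_center hji (hwg ▸ hg)
  · exact w.prod_notMem_center_of_ne hil (hwg ▸ hg)

end Monoid.CoprodI

namespace ZMod

variable {W : Type*} [Group W] {n : ℕ}

theorem zpow_ofAdd_one_surjective (n : ℕ) :
    Function.Surjective fun k : ℤ => Multiplicative.ofAdd (1 : ZMod n) ^ k := fun u => by
  obtain ⟨k, hk⟩ := ZMod.intCast_surjective (Multiplicative.toAdd u)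
  exact ⟨k, by simp [← ofAdd_zsmul, hk]⟩

theorem multiplicative_hom_ext {f f' : Multiplicative (ZMod n) →* W}
    (h : f (.ofAdd 1) = f' (.ofAdd 1)) : f = f' := by
  refine MonoidHom.ext fun u => ?_
  obtain ⟨k, rfl⟩ := zpow_ofAdd_one_surjective n u
  simp only [map_zpow, h]

def liftOfPowEqOne (g : W) (hg : g ^ n = 1) : Multiplicative (ZMod n) →* W :=
  AddMonoidHom.toMultiplicativeLeft <|
    ZMod.lift n ⟨zmultiplesHom (Additive W) (.ofMul g), by simp [← ofMul_pow, hg]⟩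

theorem liftOfPowEqOne_ofAdd_one (g : W) (hg : g ^ n = 1) :
    liftOfPowEqOne g hg (.ofAdd 1) = g := by
  rw [← Int.cast_one]
  simp [liftOfPowEqOne, -Int.cast_one]

end ZMod

/-- The free product of the cyclic groups `ℤ/(n i)`; since `ZMod 0 = ℤ`, an index with `n i = 0`
contributes an infinite cyclic factor. -/
abbrev CyclicFreeProduct {ι : Type*} (n : ι → ℕ) : Type _ :=
  Monoid.CoprodI fun i => Multiplicative (ZMod (n i))

namespace CyclicFreeProduct

variable {ι : Type*} {n : ι → ℕ} {W : Type*} [Group W]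

def gen (i : ι) : CyclicFreeProduct n :=
  Monoid.CoprodI.of (Multiplicative.ofAdd (1 : ZMod (n i)))

theorem gen_pow (i : ι) : gen (n := n) i ^ n i = 1 := by
  rw [gen, ← map_pow, ← ofAdd_nsmul, nsmul_one, ZMod.natCast_self, ofAdd_zero, map_one]

def lift (u : ι → W) (hu : ∀ i, u i ^ n i = 1) : CyclicFreeProduct n →* W :=
  Monoid.CoprodI.lift fun i => ZMod.liftOfPowEqOne (u i) (hu i)

@[simp]
theorem lift_gen (u : ι → W) (hu : ∀ i, u i ^ n i = 1) (i : ι) : lift u hu (gen i) = u i := by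
  rw [lift, gen, Monoid.CoprodI.lift_of, ZMod.liftOfPowEqOne_ofAdd_one]

theorem hom_ext {f f' : CyclicFreeProduct n →* W} (h : ∀ i, f (gen i) = f' (gen i)) : f = f' :=
  Monoid.CoprodI.ext_hom _ _ fun i => ZMod.multiplicative_hom_ext (h i)

theorem surjective_of_gen_mem_range {f : W →* CyclicFreeProduct n}
    (h : ∀ i, gen i ∈ f.range) : Function.Surjective f := by
  refine MonoidHom.range_eq_top.1 ((Subgroup.eq_top_iff' _).2 fun u => ?_)
  induction u using Monoid.CoprodI.induction_on with
  | one => exact one_mem _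
  | of i x =>
    obtain ⟨k, rfl⟩ := ZMod.zpow_ofAdd_one_surjective (n i) x
    rw [map_zpow]
    exact zpow_mem (h i) k
  | mul x y hx hy => exact mul_mem hx hy

theorem center_eq_bot [Nontrivial ι] (hn : ∀ i, n i ≠ 1) :
    Subgroup.center (CyclicFreeProduct n) = ⊥ :=
  have (i : ι) : Nontrivial (Multiplicative (ZMod (n i))) := ZMod.nontrivial_iff.2 (hn i)
  Monoid.CoprodI.center_eq_bot

end CyclicFreeProduct

namespace Subgroup

variable {G : Type*} [Group G]

theorem normal_of_le_center {N : Subgroup G} (h : N ≤ center G) : N.Normal :=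
  ⟨fun n hn g => by rwa [mem_center_iff.1 (h hn) g, mul_inv_cancel_right]⟩

theorem center_le_of_mk_factorization {F : Type*} [Group F] {N : Subgroup G} [N.Normal]
    {π : G →* F} (hπ : Function.Surjective π) (hF : center F = ⊥) {ψ : F →* G ⧸ N}
    (hψ : ψ.comp π = QuotientGroup.mk' N) : center G ≤ N := by
  intro g hg
  have hπg : π g ∈ center F := mem_center_iff.2 fun u => by
    obtain ⟨h, rfl⟩ := hπ u
    rw [← map_mul, mem_center_iff.1 hg, map_mul]
  rw [hF, mem_bot] at hπg
  rw [← QuotientGroup.eq_one_iff, ← QuotientGroup.mk'_apply, ← hψ, MonoidHom.comp_apply, hπg,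
    map_one]

end Subgroup

namespace DihedralArtinGroup

variable {m : ℕ} {W : Type*} [Group W]

abbrev x₁ (m : ℕ) : DihedralArtinGroup m := agen (Mdih m) 0

abbrev x₂ (m : ℕ) : DihedralArtinGroup m := agen (Mdih m) 1

theorem altProd_x₁_x₂ : altProd m (x₁ m) (x₂ m) = altProd m (x₂ m) (x₁ m) := by
  have h := PresentedGroup.mk_eq_mk_of_mul_inv_mem (rels := artinRels (Mdih m))
    ⟨0, 1, m, by decide, by simp [Mdih], rfl⟩
  rwa [map_altProd, map_altProd] at h

def lift (a b : W) (h : altProd m a b = altProd m b a) : DihedralArtinGroup m →* W :=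
  PresentedGroup.toGroup (f := ![a, b]) <| by
    rintro r ⟨i, j, m', hij, hm', rfl⟩
    rw [Mdih, if_neg hij, ENat.natCast_inj] at hm'
    subst hm'
    rw [map_mul, map_inv, mul_inv_eq_one, map_altProd, map_altProd, FreeGroup.lift_apply_of,
      FreeGroup.lift_apply_of]
    fin_cases i <;> fin_cases j <;> simp_all

@[simp]
theorem lift_x₁ (a b : W) (h : altProd m a b = altProd m b a) : lift a b h (x₁ m) = a :=
  PresentedGroup.toGroup.of _

@[simp]
theorem lift_x₂ (a b : W) (h : altProd m a b = altProd m b a) : lift a b h (x₂ m) = b :=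
  PresentedGroup.toGroup.of _

theorem hom_ext {f f' : DihedralArtinGroup m →* W} (h₁ : f (x₁ m) = f' (x₁ m))
    (h₂ : f (x₂ m) = f' (x₂ m)) : f = f' :=
  PresentedGroup.ext fun i => by fin_cases i <;> assumption

theorem mem_center_of_commute {c : DihedralArtinGroup m} (h₁ : Commute c (x₁ m))
    (h₂ : Commute c (x₂ m)) : c ∈ Subgroup.center (DihedralArtinGroup m) := by
  have hconj : (MulAut.conj c).toMonoidHom = MonoidHom.id _ :=
    hom_ext (by simp [h₁.eq]) (by simp [h₂.eq])
  refine Subgroup.mem_center_iff.2 fun g => ?_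
  have := DFunLike.congr_fun hconj g
  simp only [MulEquiv.coe_toMonoidHom, MulAut.conj_apply, MonoidHom.id_apply] at this
  exact eq_mul_inv_iff_mul_eq.1 this.symm

theorem not_isOfFinOrder_x₁_mul_x₂_pow {n : ℕ} (hn : n ≠ 0) :
    ¬IsOfFinOrder ((x₁ m * x₂ m) ^ n) := fun h => by
  let deg : DihedralArtinGroup m →* Multiplicative ℤ := lift (.ofAdd 1) (.ofAdd 1) rfl
  have hdeg : deg ((x₁ m * x₂ m) ^ n) = .ofAdd (2 * n : ℤ) := by
    rw [map_pow, map_mul, lift_x₁, lift_x₂, ← ofAdd_add, ← ofAdd_nsmul, nsmul_eq_mul]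
    push_cast
    ring_nf
  have := deg.isOfFinOrder h
  rw [hdeg, isOfFinOrder_ofAdd_iff, isOfFinAddOrder_iff_eq_zero] at this
  omega

theorem x₁_mul_x₂_pow_mem_center_of_even (k : ℕ) :
    (x₁ (2 * k) * x₂ (2 * k)) ^ k ∈ Subgroup.center (DihedralArtinGroup (2 * k)) := by
  have h : (x₁ (2 * k) * x₂ (2 * k)) ^ k = (x₂ _ * x₁ _) ^ k := by
    simpa only [altProd_two_mul] using altProd_x₁_x₂ (m := 2 * k)
  refine mem_center_of_commute ?_ ?_
  · rw [commute_iff_eq, mul_pow_mul, ← h]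
  · rw [commute_iff_eq, h, mul_pow_mul, ← h]

open CyclicFreeProduct in
theorem center_eq_zpowers_of_even {k : ℕ} (hk : k ≠ 1) :
    Subgroup.center (DihedralArtinGroup (2 * k)) =
      Subgroup.zpowers ((x₁ (2 * k) * x₂ (2 * k)) ^ k) := by
  set z := (x₁ (2 * k) * x₂ (2 * k)) ^ k
  have hz : z ∈ Subgroup.center _ := x₁_mul_x₂_pow_mem_center_of_even k
  have := Subgroup.normal_of_le_center (Subgroup.zpowers_le.2 hz)
  let a : CyclicFreeProduct ![0, k] := gen 0
  let b : CyclicFreeProduct ![0, k] := gen 1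
  have hb : b ^ k = 1 := gen_pow 1
  have hrel := altProd_two_mul_inv_mul_eq_one (a := a) hb
  let π : DihedralArtinGroup (2 * k) →* _ := lift a (a⁻¹ * b) (hrel.1.trans hrel.2.symm)
  let q := QuotientGroup.mk' (Subgroup.zpowers z)
  have hq : q z = 1 := (QuotientGroup.eq_one_iff _).2 (Subgroup.mem_zpowers _)
  let ψ : CyclicFreeProduct ![0, k] →* _ := CyclicFreeProduct.lift ![q (x₁ _), q (x₁ _ * x₂ _)]
    (Fin.forall_fin_two.2 ⟨pow_zero _, show q _ ^ k = 1 by rw [← map_pow]; exact hq⟩)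
  refine le_antisymm (Subgroup.center_le_of_mk_factorization (π := π) ?_ ?_ (ψ := ψ) ?_)
    (Subgroup.zpowers_le.2 hz)
  · refine surjective_of_gen_mem_range
      (Fin.forall_fin_two.2 ⟨⟨x₁ _, lift_x₁ ..⟩, ⟨x₁ _ * x₂ _, ?_⟩⟩)
    simp [π, a, b]
  · exact center_eq_bot (Fin.forall_fin_two.2 ⟨zero_ne_one, hk⟩)
  · exact hom_ext (by simp [ψ, π, a, q]) (by simp [ψ, π, a, b, q])

section Odd

variable (k : ℕ)

abbrev garside : DihedralArtinGroup (2 * k + 1) := altProd (2 * k + 1) (x₁ _) (x₂ _)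

theorem garside_mul_x₁ : garside k * x₁ _ = x₂ _ * garside k := by
  rw [garside, ← altProd_two_mul_add_one_mul, altProd_x₁_x₂]

theorem garside_mul_x₂ : garside k * x₂ _ = x₁ _ * garside k := by
  rw [garside, altProd_two_mul_add_one_mul, altProd_x₁_x₂]

theorem garside_mul_garside : garside k * garside k = (x₁ _ * x₂ _) ^ (2 * k + 1) := by
  nth_rewrite 2 [garside]
  rw [altProd_x₁_x₂, altProd_two_mul_add_one_mul_altProd]

theorem x₁_mul_x₂_pow_mem_center_of_odd :
    (x₁ (2 * k + 1) * x₂ (2 * k + 1)) ^ (2 * k + 1) ∈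
      Subgroup.center (DihedralArtinGroup (2 * k + 1)) := by
  rw [← garside_mul_garside]
  refine mem_center_of_commute ?_ ?_
  · rw [commute_iff_eq, mul_assoc, garside_mul_x₁, ← mul_assoc, garside_mul_x₂, mul_assoc]
  · rw [commute_iff_eq, mul_assoc, garside_mul_x₂, ← mul_assoc, garside_mul_x₁, mul_assoc]

end Odd

open CyclicFreeProduct in
theorem center_eq_zpowers_of_odd {k : ℕ} (hk : k ≠ 0) :
    Subgroup.center (DihedralArtinGroup (2 * k + 1)) =
      Subgroup.zpowers ((x₁ (2 * k + 1) * x₂ (2 * k + 1)) ^ (2 * k + 1)) := by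
  set z := (x₁ (2 * k + 1) * x₂ (2 * k + 1)) ^ (2 * k + 1)
  have hz : z ∈ Subgroup.center _ := x₁_mul_x₂_pow_mem_center_of_odd k
  have := Subgroup.normal_of_le_center (Subgroup.zpowers_le.2 hz)
  let a : CyclicFreeProduct ![2, 2 * k + 1] := gen 0
  let b : CyclicFreeProduct ![2, 2 * k + 1] := gen 1
  have hrel := altProd_two_mul_add_one_zpow_mul_eq (gen_pow 0 : a ^ 2 = 1) (gen_pow 1 : b ^ _ = 1)
  -- the images of `x₁, x₂` are forced by `x₁x₂ ↦ b` and `Δ ↦ a`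
  let π : DihedralArtinGroup (2 * k + 1) →* _ :=
    lift (b ^ (-k : ℤ) * a) (a⁻¹ * b ^ (k + 1)) (hrel.1.trans hrel.2.symm)
  let q := QuotientGroup.mk' (Subgroup.zpowers z)
  have hq : q z = 1 := (QuotientGroup.eq_one_iff _).2 (Subgroup.mem_zpowers _)
  let ψ : CyclicFreeProduct ![2, 2 * k + 1] →* _ :=
    CyclicFreeProduct.lift ![q (garside k), q (x₁ _ * x₂ _)] (Fin.forall_fin_two.2
      ⟨show q _ ^ 2 = 1 by rw [← map_pow, sq, garside_mul_garside]; exact hq,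
        show q _ ^ (2 * k + 1) = 1 by rw [← map_pow]; exact hq⟩)
  refine le_antisymm (Subgroup.center_le_of_mk_factorization (π := π) ?_ ?_ (ψ := ψ) ?_)
    (Subgroup.zpowers_le.2 hz)
  · refine surjective_of_gen_mem_range
      (Fin.forall_fin_two.2 ⟨⟨garside k, ?_⟩, ⟨x₁ _ * x₂ _, ?_⟩⟩)
    · rw [garside, map_altProd, lift_x₁, lift_x₂]
      exact hrel.1
    · simp only [π, b, map_mul, lift_x₁, lift_x₂]
      group
  · exact center_eq_bot (Fin.forall_fin_two.2 ⟨by simp, by simpa using hk⟩)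
  · refine hom_ext ?_ ?_ <;>
      simp [ψ, π, a, b, q, garside, altProd_two_mul_add_one, pow_succ, mul_assoc]

end DihedralArtinGroup

/-- For `m ≥ 3`, the center of `G(m)` is the infinite cyclic subgroup
generated by `z`, where `z = (x₁x₂)^{m/2}` for even `m` and `z = (x₁x₂)^m` for odd `m`. -/
theorem dihedral_center (m : ℕ) (hm : 3 ≤ m) :
    Subgroup.center (DihedralArtinGroup m) =
      Subgroup.zpowers
        (if Even m then (agen (Mdih m) 0 * agen (Mdih m) 1) ^ (m / 2)
         else (agen (Mdih m) 0 * agen (Mdih m) 1) ^ m) ∧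
    ¬ IsOfFinOrder
        (if Even m then (agen (Mdih m) 0 * agen (Mdih m) 1) ^ (m / 2)
         else (agen (Mdih m) 0 * agen (Mdih m) 1) ^ m) := by
  open DihedralArtinGroup in
  rcases Nat.even_or_odd' m with ⟨k, rfl | rfl⟩
  · rw [if_pos (even_two_mul k), Nat.mul_div_cancel_left k two_pos]
    exact ⟨center_eq_zpowers_of_even (by omega), not_isOfFinOrder_x₁_mul_x₂_pow (by omega)⟩
  · rw [if_neg (Nat.not_even_two_mul_add_one k)]
    exact ⟨center_eq_zpowers_of_odd (by omega), not_isOfFinOrder_x₁_mul_x₂_pow (by omega)⟩
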